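/- arXiv:1412.0132 — 10 statements merged into one kernel-verified Lean document; each statement's English description precedes it below -/
import Mathlib

section
/- For any strictly increasing real sequences x₁ < x₂ < ... < x_m and y₁ < y₂ < ... < y_m, the determinant det[exp(x_i · y_j)]_{1≤i,j≤m} is strictly positive. -/
/-!
An exponential sum `∑ⱼ cⱼ e^{t yⱼ}` with distinct frequencies `yⱼ` and not all `cⱼ = 0` has fewer
zeros than terms: multiplying by `e^{-t y₀}` and differentiating kills one term, and Rolle's
theorem loses at most one zero. Hence `det [e^{xᵢ yⱼ}]` never vanishes while `x` and `y` are
increasing. The increasing `y` form a convex set, so the sign of the determinant is that at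
`yⱼ = j`, where the matrix is the Vandermonde matrix of the increasing `e^{xᵢ}`.
-/

open Real Finset Function

theorem IsPreconnected.pos_of_pos_of_ne_zero {X : Type*} [TopologicalSpace X] {s : Set X}
    (hs : IsPreconnected s) {f : X → ℝ} (hf : ContinuousOn f s) (hf0 : ∀ x ∈ s, f x ≠ 0)
    {a b : X} (ha : a ∈ s) (hb : b ∈ s) (hfa : 0 < f a) : 0 < f b := by
  by_contra! hfb
  obtain ⟨c, hc, hfc⟩ := hs.intermediate_value hb ha hf ⟨hfb, hfa.le⟩
  exact hf0 c hc hfc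

theorem convex_setOf_strictMono {ι : Type*} [PartialOrder ι] :
    Convex ℝ {y : ι → ℝ | StrictMono y} := by
  intro y hy z hz a b ha hb hab
  rcases ha.eq_or_lt with rfl | ha
  · obtain rfl : b = 1 := by simpa using hab
    simpa using hz
  · exact (hy.const_mul ha).add_monotone (hz.monotone.const_mul hb)

theorem Matrix.det_vandermonde_pos {R : Type*} [CommRing R] [LinearOrder R]
    [IsStrictOrderedRing R] {n : ℕ} {v : Fin n → R} (hv : StrictMono v) :
    0 < (vandermonde v).det := by
  rw [det_vandermonde]
  exact prod_pos fun i _ => prod_pos fun j hj => sub_pos.2 (hv (mem_Ioi.1 hj))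

theorem exists_strictMono_deriv_eq_zero {n : ℕ} {f : ℝ → ℝ} (hf : Differentiable ℝ f)
    {x : Fin (n + 1) → ℝ} (hx : StrictMono x) (hfx : ∀ i, f (x i) = 0) :
    ∃ z : Fin n → ℝ, StrictMono z ∧ ∀ i, deriv f (z i) = 0 := by
  have hRolle : ∀ i : Fin n, ∃ z ∈ Set.Ioo (x i.castSucc) (x i.succ), deriv f z = 0 := fun i =>
    exists_deriv_eq_zero (hx i.castSucc_lt_succ) hf.continuous.continuousOn (by rw [hfx, hfx])
  choose z hz hderiv using hRolle
  refine ⟨z, fun i k hik => ?_, hderiv⟩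
  calc z i < x i.succ := (hz i).2
    _ ≤ x k.castSucc := hx.monotone (Fin.succ_le_castSucc_iff.mpr hik)
    _ < z k := (hz k).1

noncomputable def expSum {ι : Type*} [Fintype ι] (c y : ι → ℝ) (t : ℝ) : ℝ :=
  ∑ j, c j * exp (t * y j)

section expSum

variable {ι : Type*} [Fintype ι] (c y : ι → ℝ)

theorem hasDerivAt_expSum (t : ℝ) :
    HasDerivAt (expSum c y) (expSum (fun j => c j * y j) y t) t := by
  refine (HasDerivAt.fun_sum (u := univ) fun j _ =>
    ((hasDerivAt_mul_const (y j)).exp).const_mul (c j)).congr_deriv ?_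
  exact sum_congr rfl fun j _ => by ring

theorem expSum_sub_const (a t : ℝ) :
    expSum c (fun j => y j - a) t = exp (-(t * a)) * expSum c y t := by
  simp only [expSum, mul_sum, mul_sub, exp_sub, exp_neg]
  exact sum_congr rfl fun j _ => by ring

end expSum

theorem expSum_fin_succ {n : ℕ} (c y : Fin (n + 1) → ℝ) (t : ℝ) :
    expSum c y t =
      c 0 * exp (t * y 0) + expSum (fun j : Fin n => c j.succ) (fun j => y j.succ) t :=
  Fin.sum_univ_succ _

theorem eq_zero_of_expSum_eq_zero {m : ℕ} {c x y : Fin m → ℝ} (hx : StrictMono x)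
    (hy : Injective y) (h : ∀ i, expSum c y (x i) = 0) : c = 0 := by
  induction m with
  | zero => exact Subsingleton.elim _ _
  | succ n ih =>
    set y' : Fin (n + 1) → ℝ := fun j => y j - y 0
    have hy'x : ∀ i, expSum c y' (x i) = 0 := fun i => by rw [expSum_sub_const, h, mul_zero]
    obtain ⟨z, hz, hderiv⟩ := exists_strictMono_deriv_eq_zero
      (fun t => (hasDerivAt_expSum c y' t).differentiableAt) hx hy'x
    have htail : (fun j : Fin n => c j.succ * y' j.succ) = 0 := by
      refine ih (y := fun j => y' j.succ) hz
        (fun a b hab => Fin.succ_injective _ (hy (sub_left_injective hab))) fun i => ?_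
      have := hderiv i
      rwa [(hasDerivAt_expSum c y' _).deriv, expSum_fin_succ, show y' 0 = 0 from sub_self _,
        mul_zero, zero_mul, zero_add] at this
    have hc_succ : ∀ j : Fin n, c j.succ = 0 := fun j =>
      (mul_eq_zero.1 (congrFun htail j)).resolve_right
        (sub_ne_zero.2 (hy.ne (Fin.succ_ne_zero j)))
    have hc_zero : c 0 = 0 := by
      have := h 0
      rw [expSum_fin_succ] at this
      simp only [hc_succ, expSum, zero_mul, sum_const_zero, add_zero] at this
      exact (mul_eq_zero.1 this).resolve_right (exp_ne_zero _)
    ext j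
    cases j using Fin.cases with
    | zero => exact hc_zero
    | succ j => exact hc_succ j

theorem det_exp_mul_ne_zero {m : ℕ} {x y : Fin m → ℝ} (hx : StrictMono x) (hy : Injective y) :
    (Matrix.of fun i j => exp (x i * y j)).det ≠ 0 := by
  rw [Ne, ← Matrix.exists_mulVec_eq_zero_iff]
  rintro ⟨c, hc, hmul⟩
  refine hc (eq_zero_of_expSum_eq_zero hx hy fun i => ?_)
  simpa [expSum, Matrix.mulVec, dotProduct, mul_comm] using congrFun hmul i

theorem det_exp_mul_natCast_pos {m : ℕ} {x : Fin m → ℝ} (hx : StrictMono x) :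
    0 < (Matrix.of fun i (j : Fin m) => exp (x i * j)).det := by
  have hvandermonde : (Matrix.of fun i (j : Fin m) => exp (x i * j)) =
      Matrix.vandermonde fun i => exp (x i) := by
    ext i j
    rw [Matrix.of_apply, Matrix.vandermonde_apply, mul_comm, exp_nat_mul]
  rw [hvandermonde]
  exact Matrix.det_vandermonde_pos (exp_strictMono.comp hx)

theorem exp_kernel_strictly_totally_positive (m : ℕ) (x y : Fin m → ℝ)
    (hx : StrictMono x) (hy : StrictMono y) :
    0 < Matrix.det (Matrix.of fun i j => Real.exp (x i * y j)) := by
  have hcont : Continuous fun y : Fin m → ℝ => (Matrix.of fun i j => exp (x i * y j)).det :=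
    Continuous.matrix_det (continuous_matrix fun i j => by fun_prop)
  exact convex_setOf_strictMono.isPreconnected.pos_of_pos_of_ne_zero hcont.continuousOn
    (fun y hy => det_exp_mul_ne_zero hx hy.injective) (a := fun j : Fin m => (j : ℝ))
    (fun _ _ h => Nat.cast_lt.mpr h) hy (det_exp_mul_natCast_pos hx)
end

section
/- For any strictly increasing sequences 0 < x₁ < ... < x_m and 0 < y₁ < ... < y_m, the determinant det[exp(-x_i / y_j)]_{1≤i,j≤m} is strictly positive. -/
/-! Writing `b i = exp (x i)` and `e j = -1 / y j`, the kernel becomes `b i ^ e j` with `0 < b`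
and both `b` and `e` strictly increasing, so the claim is the positivity of a generalised
Vandermonde determinant. Such a determinant is nonzero: a kernel vector would give a function
`∑ c j * t ^ e j` with `n` positive zeros, and dividing by `t ^ e 0` and applying Rolle's theorem
produces a function of the same shape with `n - 1` terms and `n - 1` positive zeros. Deforming the
exponents linearly into `0, 1, …, n - 1` keeps them strictly increasing, so the determinant
never vanishes along the way and has the sign of the ordinary Vandermonde determinant. -/

open Matrix Finset

theorem exists_strictMono_deriv_eq_zero_of_eq_zero {n : ℕ} {f f' : ℝ → ℝ}
    {t : Fin (n + 1) → ℝ} (ht : StrictMono t) (hf : ∀ s, t 0 ≤ s → HasDerivAt f (f' s) s)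
    (hz : ∀ i, f (t i) = 0) :
    ∃ u : Fin n → ℝ, StrictMono u ∧ (∀ i, t i.castSucc < u i) ∧ ∀ i, f' (u i) = 0 := by
  have hle (s : ℝ) (i : Fin (n + 1)) (h : t i ≤ s) : t 0 ≤ s := (ht.monotone i.zero_le).trans h
  have hroot (i : Fin n) : ∃ u ∈ Set.Ioo (t i.castSucc) (t i.succ), f' u = 0 :=
    exists_hasDerivAt_eq_zero (ht i.castSucc_lt_succ)
      (fun s hs => (hf s (hle s _ hs.1)).continuousAt.continuousWithinAt) (by rw [hz, hz])
      (fun s hs => hf s (hle s _ hs.1.le))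
  choose u hu hu0 using hroot
  refine ⟨u, fun i i' hii' => ?_, fun i => (hu i).1, hu0⟩
  calc u i < t i.succ := (hu i).2
    _ ≤ t i'.castSucc := ht.monotone (Fin.le_def.mpr (by simpa using hii'))
    _ < u i' := (hu i').1

theorem eq_zero_of_sum_mul_rpow_eq_zero {n : ℕ} {α t : Fin n → ℝ} (c : Fin n → ℝ)
    (hα : StrictMono α) (ht : StrictMono t) (ht0 : ∀ i, 0 < t i)
    (hz : ∀ i, ∑ j, c j * t i ^ α j = 0) : c = 0 := by
  induction n with
  | zero => exact funext fun i => i.elim0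
  | succ n ih =>
    set g : ℝ → ℝ := fun s => ∑ j, c j * s ^ (α j - α 0)
    set g' : ℝ → ℝ := fun s => ∑ j, c j * ((α j - α 0) * s ^ (α j - α 0 - 1))
    have hg (s : ℝ) (hs : 0 < s) : HasDerivAt g (g' s) s :=
      HasDerivAt.fun_sum fun j _ => (Real.hasDerivAt_rpow_const (Or.inl hs.ne')).const_mul (c j)
    have hgz (i : Fin (n + 1)) : g (t i) = 0 := by
      have : g (t i) = (∑ j, c j * t i ^ α j) * t i ^ (-α 0) := by
        simp only [g, sum_mul, mul_assoc, ← Real.rpow_add (ht0 i), sub_eq_add_neg]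
      rw [this, hz i, zero_mul]
    obtain ⟨u, hu, htu, hu0⟩ := exists_strictMono_deriv_eq_zero_of_eq_zero ht
      (fun s hs => hg s ((ht0 0).trans_le hs)) hgz
    have hcα : (fun j : Fin n => c j.succ * (α j.succ - α 0)) = 0 := by
      refine ih (α := fun j => α j.succ - α 0 - 1) _
        (fun a b hab => by simpa using hα (Fin.succ_lt_succ_iff.mpr hab)) hu
        (fun i => (ht0 _).trans (htu i)) fun i => ?_
      rw [← hu0 i]
      simp only [g', Fin.sum_univ_succ, sub_self, zero_mul, mul_zero, zero_add]
      exact sum_congr rfl fun j _ => by ring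
    have hc_succ (j : Fin n) : c j.succ = 0 := by
      simpa [(sub_pos.mpr (hα (Fin.succ_pos j))).ne'] using congrFun hcα j
    have hc_zero : c 0 = 0 := by
      simpa [Fin.sum_univ_succ, hc_succ, (Real.rpow_pos_of_pos (ht0 0) (α 0)).ne'] using hz 0
    exact funext fun j => Fin.cases hc_zero hc_succ j

theorem det_of_rpow_ne_zero {n : ℕ} {b e : Fin n → ℝ} (hb0 : ∀ i, 0 < b i)
    (hb : StrictMono b) (he : StrictMono e) : det (of fun i j => b i ^ e j) ≠ 0 := by
  intro h
  obtain ⟨v, hv, hv0⟩ := exists_mulVec_eq_zero_iff.mpr h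
  refine hv (eq_zero_of_sum_mul_rpow_eq_zero v he hb hb0 fun i => ?_)
  simpa [mulVec, dotProduct, mul_comm] using congrFun hv0 i

theorem StrictMono.convex_combination {ι : Type*} [PartialOrder ι] {e f : ι → ℝ}
    (he : StrictMono e) (hf : StrictMono f) {s : ℝ} (hs : s ∈ Set.Icc (0 : ℝ) 1) :
    StrictMono fun j => (1 - s) * e j + s * f j := by
  rcases hs.1.eq_or_lt with rfl | hs0
  · simpa using he
  · exact fun j j' h => by
      linarith [hf.const_mul hs0 h, he.monotone.const_mul (sub_nonneg.mpr hs.2) h.le]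

theorem det_of_rpow_pos {n : ℕ} {b e : Fin n → ℝ} (hb0 : ∀ i, 0 < b i)
    (hb : StrictMono b) (he : StrictMono e) : 0 < det (of fun i j => b i ^ e j) := by
  set F : ℝ → ℝ := fun s => det (of fun i j : Fin n => b i ^ ((1 - s) * e j + s * (j : ℝ)))
  have hF : ContinuousOn F (Set.Icc 0 1) := by
    refine (Continuous.matrix_det (continuous_matrix fun i j => ?_)).continuousOn
    simp only [of_apply, Real.rpow_def_of_pos (hb0 i)]
    fun_prop
  have hF_ne (s : ℝ) (hs : s ∈ Set.Icc (0 : ℝ) 1) : F s ≠ 0 :=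
    det_of_rpow_ne_zero hb0 hb (he.convex_combination (fun _ _ h => by exact_mod_cast h) hs)
  have hF_one : 0 < F 1 := by
    have : F 1 = det (vandermonde b) := by
      simp [F, vandermonde, ← Real.rpow_natCast]
    rw [this, det_vandermonde]
    exact prod_pos fun i _ => prod_pos fun j hj => sub_pos.mpr (hb (mem_Ioi.mp hj))
  have hF_zero : F 0 = det (of fun i j => b i ^ e j) := by simp [F]
  rw [← hF_zero]
  by_contra! h
  obtain ⟨s, hs, hs0⟩ := isPreconnected_Icc.intermediate_value (Set.left_mem_Icc.mpr zero_le_one)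
    (Set.right_mem_Icc.mpr zero_le_one) hF ⟨h, hF_one.le⟩
  exact hF_ne s hs hs0

theorem exp_neg_div_kernel_strictly_totally_positive_general (m : ℕ) (x y : Fin m → ℝ)
    (hy0 : ∀ j, 0 < y j)
    (hx : StrictMono x) (hy : StrictMono y) :
    0 < Matrix.det (Matrix.of fun i j => Real.exp (-(x i) / y j)) := by
  have he : StrictMono fun j => -(y j)⁻¹ := fun j j' h =>
    neg_lt_neg ((inv_lt_inv₀ (hy0 j') (hy0 j)).mpr (hy h))
  convert det_of_rpow_pos (fun i => Real.exp_pos (x i)) (Real.exp_strictMono.comp hx) he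
    using 3 with i j
  simp [← Real.exp_mul, div_eq_mul_inv]

theorem exp_neg_div_kernel_strictly_totally_positive (m : ℕ) (x y : Fin m → ℝ)
    (hx0 : ∀ i, 0 < x i) (hy0 : ∀ j, 0 < y j)
    (hx : StrictMono x) (hy : StrictMono y) :
    0 < Matrix.det (Matrix.of fun i j => Real.exp (-(x i) / y j)) :=
  exp_neg_div_kernel_strictly_totally_positive_general m x y hy0 hx hy
end

section
/- Let α ∈ (0,1) and define the generalized Cauchy kernel K_α(t,x) = 1/(t² + 2cos(πα)·t·x + x²) on (0,∞)×(0,∞). Then K_α is TP₂ (i.e., K_α(t₁,x₁)K_α(t₂,x₂) ≥ K_α(t₁,x₂)K_α(t₂,x₁) for all 0 < t₁ < t₂ and 0 < x₁ < x₂) if and only if α ≤ 1/2. -/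
open Real

theorem generalized_cauchy_kernel_TP2_iff (α : ℝ) (hα : α ∈ Set.Ioo (0:ℝ) 1) :
    (∀ t₁ t₂ x₁ x₂ : ℝ, 0 < t₁ → t₁ < t₂ → 0 < x₁ → x₁ < x₂ →
        (1 / (t₂ ^ 2 + 2 * Real.cos (π * α) * t₂ * x₂ + x₂ ^ 2)) *
          (1 / (t₁ ^ 2 + 2 * Real.cos (π * α) * t₁ * x₁ + x₁ ^ 2)) -
        (1 / (t₁ ^ 2 + 2 * Real.cos (π * α) * t₁ * x₂ + x₂ ^ 2)) *
          (1 / (t₂ ^ 2 + 2 * Real.cos (π * α) * t₂ * x₁ + x₁ ^ 2)) ≥ 0)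
      ↔ α ≤ 1 / 2 := by
  obtain ⟨hα0, hα1⟩ := hα
  have hπ := Real.pi_pos
  set c := Real.cos (π * α) with hcdef
  have hc1 : -1 < c := by
    have h2 : π * α < π := by nlinarith
    have := Real.cos_lt_cos_of_nonneg_of_le_pi (le_of_lt (mul_pos hπ hα0)) le_rfl h2
    rw [Real.cos_pi] at this
    linarith
  have key : ∀ t x : ℝ, 0 < t → 0 < x → 0 < t ^ 2 + 2 * c * t * x + x ^ 2 := by
    intro t x ht hx
    nlinarith [sq_nonneg (t - x), mul_pos ht hx]
  constructor
  · intro H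
    by_contra h
    push_neg at h
    have hcneg : c < 0 := by
      apply Real.cos_neg_of_pi_div_two_lt_of_lt
      · nlinarith
      · nlinarith
    set s := -c with hsdef
    have hs : 0 < s := by linarith
    set T := 4 / s with hTdef
    have hT : s * T = 4 := by rw [hTdef]; field_simp
    have hT0 : 0 < T := by positivity
    have H1 := H T (T + 1) 1 2 hT0 (by linarith) one_pos one_lt_two
    -- denominators
    have hA : 0 < (T + 1) ^ 2 + 2 * c * (T + 1) * 2 + 2 ^ 2 := key _ _ (by linarith) two_pos
    have hB : 0 < T ^ 2 + 2 * c * T * 1 + 1 ^ 2 := key _ _ hT0 one_pos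
    have hA' : 0 < T ^ 2 + 2 * c * T * 2 + 2 ^ 2 := key _ _ hT0 two_pos
    have hB' : 0 < (T + 1) ^ 2 + 2 * c * (T + 1) * 1 + 1 ^ 2 := key _ _ (by linarith) one_pos
    have hlt : (T ^ 2 + 2 * c * T * 2 + 2 ^ 2) * ((T + 1) ^ 2 + 2 * c * (T + 1) * 1 + 1 ^ 2)
        < ((T + 1) ^ 2 + 2 * c * (T + 1) * 2 + 2 ^ 2) * (T ^ 2 + 2 * c * T * 1 + 1 ^ 2) := by
      nlinarith [hT, hs, mul_pos hs hs, mul_pos hs hT0, sq_nonneg s]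
    have h1 : (1 : ℝ) / (((T + 1) ^ 2 + 2 * c * (T + 1) * 2 + 2 ^ 2) * (T ^ 2 + 2 * c * T * 1 + 1 ^ 2))
        < 1 / ((T ^ 2 + 2 * c * T * 2 + 2 ^ 2) * ((T + 1) ^ 2 + 2 * c * (T + 1) * 1 + 1 ^ 2)) :=
      one_div_lt_one_div_of_lt (mul_pos hA' hB') hlt
    rw [ge_iff_le, sub_nonneg, div_mul_div_comm, div_mul_div_comm, one_mul] at H1
    have := lt_of_le_of_lt H1 h1
    exact absurd this (lt_irrefl _)
  · intro hhalf t₁ t₂ x₁ x₂ ht₁ ht ht₂x hx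
    have hc0 : 0 ≤ c := by
      apply Real.cos_nonneg_of_mem_Icc
      constructor
      · nlinarith
      · nlinarith
    have ht₂ : 0 < t₂ := lt_trans ht₁ ht
    have hx₂ : 0 < x₂ := lt_trans ht₂x hx
    have hA : 0 < t₂ ^ 2 + 2 * c * t₂ * x₂ + x₂ ^ 2 := key _ _ ht₂ hx₂
    have hB : 0 < t₁ ^ 2 + 2 * c * t₁ * x₁ + x₁ ^ 2 := key _ _ ht₁ ht₂x
    have hA' : 0 < t₁ ^ 2 + 2 * c * t₁ * x₂ + x₂ ^ 2 := key _ _ ht₁ hx₂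
    have hB' : 0 < t₂ ^ 2 + 2 * c * t₂ * x₁ + x₁ ^ 2 := key _ _ ht₂ ht₂x
    have hbr : 0 ≤ (t₂ - t₁) * (x₂ - x₁) * ((t₁ + t₂) * (x₁ + x₂) + 2 * c * (t₁ * t₂ + x₁ * x₂)) := by
      apply mul_nonneg (mul_nonneg (by linarith) (by linarith))
      have h1 : 0 < (t₁ + t₂) * (x₁ + x₂) := by positivity
      have h2 : 0 ≤ 2 * c * (t₁ * t₂ + x₁ * x₂) := by positivity
      linarith
    have hle : (t₂ ^ 2 + 2 * c * t₂ * x₂ + x₂ ^ 2) * (t₁ ^ 2 + 2 * c * t₁ * x₁ + x₁ ^ 2)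
        ≤ (t₁ ^ 2 + 2 * c * t₁ * x₂ + x₂ ^ 2) * (t₂ ^ 2 + 2 * c * t₂ * x₁ + x₁ ^ 2) := by
      nlinarith [hbr]
    have h1 : (1 : ℝ) / ((t₁ ^ 2 + 2 * c * t₁ * x₂ + x₂ ^ 2) * (t₂ ^ 2 + 2 * c * t₂ * x₁ + x₁ ^ 2))
        ≤ 1 / ((t₂ ^ 2 + 2 * c * t₂ * x₂ + x₂ ^ 2) * (t₁ ^ 2 + 2 * c * t₁ * x₁ + x₁ ^ 2)) :=
      one_div_le_one_div_of_le (mul_pos hA hB) hle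
    rw [ge_iff_le, sub_nonneg, div_mul_div_comm, div_mul_div_comm, one_mul]
    exact h1
end

section
/- For every positive integer m and all real sequences x₁ < ... < x_k and y₁ < ... < y_k, the determinant det[(y_j - x_i)₊^m]_{1≤i,j≤k} is nonnegative. In other words, the fractional integration kernel I_β(x,y) = (y-x)₊^(β-1) is totally positive of all orders whenever β is a positive integer. -/
/-!
Write `K m x y = (y - x)₊ ^ m`. Integrating, `(m + 1) ∫_c^y K m x t dt = K (m + 1) x y - K (m + 1) x c`.
Subtracting from each column of `[K (m + 1) (x i) (y j)]` the previous one (and nothing from the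
first column, taking `y₋₁ ≤ x₀`) turns it into `(m + 1)` times `[∫_{y_{j-1}}^{y_j} K m (x i) t dt]`.
Since the determinant is multilinear in the columns, this is an integral over the box
`∏ j, [y_{j-1}, y_j]` of the determinants `[K m (x i) (s j)]`, where every `s` in the box is
increasing, so induction on `m` applies. At `m = 0` the kernel is the Heaviside step `[x < y]`,
whose determinant on increasing sequences is `0` or `1` by expanding along the first column.
-/

open Matrix Set MeasureTheory Topology

theorem ContinuousMultilinearMap.apply_intervalIntegral_nonneg {ι E : Type*} [Fintype ι]
    [DecidableEq ι] [NormedAddCommGroup E] [NormedSpace ℝ E] [CompleteSpace E]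
    (f : ContinuousMultilinearMap ℝ (fun _ : ι => E) ℝ) {G : ℝ → E} {c d : ι → ℝ}
    (hcd : ∀ l, c l ≤ d l) (hG : ∀ l, IntervalIntegrable G volume (c l) (d l))
    (hf : ∀ s : ι → ℝ, (∀ l, s l ∈ Icc (c l) (d l)) → 0 ≤ f fun l => G (s l)) :
    0 ≤ f fun l => ∫ t in c l..d l, G t := by
  suffices ∀ T : Finset ι, ∀ s : ι → ℝ, (∀ l, s l ∈ Icc (c l) (d l)) →
      0 ≤ f fun l => if l ∈ T then ∫ t in c l..d l, G t else G (s l) by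
    simpa using this Finset.univ c fun l => ⟨le_rfl, hcd l⟩
  intro T
  induction T using Finset.induction_on with
  | empty => simpa using hf
  | insert l₀ T hl₀ ih =>
    intro s hs
    set v : ι → E := fun l => if l ∈ T then ∫ t in c l..d l, G t else G (s l)
    have hv (t : ℝ) : Function.update v l₀ (G t) =
        fun l => if l ∈ T then ∫ t in c l..d l, G t else G (Function.update s l₀ t l) := by
      funext l
      rcases eq_or_ne l l₀ with rfl | hl <;> simp [v, *]
    have hT : (fun l => if l ∈ insert l₀ T then ∫ t in c l..d l, G t else G (s l)) =
        Function.update v l₀ (∫ t in c l₀..d l₀, G t) := by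
      funext l
      rcases eq_or_ne l l₀ with rfl | hl <;> simp [v, *]
    rw [hT, ← f.toContinuousLinearMap_apply,
      ← (f.toContinuousLinearMap v l₀).intervalIntegral_comp_comm (hG l₀)]
    refine intervalIntegral.integral_nonneg (hcd l₀) fun t ht => ?_
    rw [f.toContinuousLinearMap_apply, hv]
    refine ih _ fun l => ?_
    rcases eq_or_ne l l₀ with rfl | hl <;> simp [*]

theorem Matrix.det_intervalIntegral_nonneg {ι : Type*} [Fintype ι] [DecidableEq ι]
    {g : ι → ℝ → ℝ} {c d : ι → ℝ} (hcd : ∀ l, c l ≤ d l)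
    (hg : ∀ i l, IntervalIntegrable (g i) volume (c l) (d l))
    (h : ∀ s : ι → ℝ, (∀ l, s l ∈ Icc (c l) (d l)) → 0 ≤ det (of fun i l => g i (s l))) :
    0 ≤ det (of fun i l => ∫ t in c l..d l, g i t) := by
  let D : ContinuousMultilinearMap ℝ (fun _ : ι => ι → ℝ) ℝ :=
    ⟨detRowAlternating.toMultilinearMap, continuous_id.matrix_det⟩
  have hD (v : ι → ι → ℝ) : D v = det (of fun i l => v l i) := (det_transpose (of v)).symm
  have hG (l : ι) : IntervalIntegrable (fun t i => g i t) volume (c l) (d l) :=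
    ⟨Integrable.of_eval fun i => (hg i l).1, Integrable.of_eval fun i => (hg i l).2⟩
  have hint (i l : ι) : (∫ t in c l..d l, fun i => g i t) i = ∫ t in c l..d l, g i t :=
    ((ContinuousLinearMap.proj (R := ℝ) (φ := fun _ : ι => ℝ) i).intervalIntegral_comp_comm
      (hG l)).symm
  simpa [hD, hint] using D.apply_intervalIntegral_nonneg hcd hG (by simpa [hD] using h)

theorem Matrix.det_heaviside_nonneg {k : ℕ} {x y : Fin k → ℝ} (hx : Monotone x)
    (hy : Monotone y) : 0 ≤ det (of fun i j => if x i < y j then (1 : ℝ) else 0) := by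
  induction k with
  | zero => simp
  | succ k ih =>
    by_cases h0 : y 0 ≤ x 0
    · rw [det_eq_zero_of_column_eq_zero 0 fun i => by
        simp [(h0.trans (hx (Fin.zero_le i))).not_gt]]
    by_cases h1 : ∃ i ≠ 0, x i < y 0
    · obtain ⟨i, hi, hxi⟩ := h1
      rw [det_zero_of_row_eq hi.symm]
      funext j
      have := hy (Fin.zero_le j)
      simp [((hx (Fin.zero_le i)).trans_lt hxi).trans_le this, hxi.trans_le this]
    push Not at h1
    rw [det_succ_column_zero, Fin.sum_univ_succ,
      Finset.sum_eq_zero fun i _ => by simp [(h1 i.succ (Fin.succ_ne_zero i)).not_gt]]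
    simp only [lt_of_not_ge h0, Fin.succAbove_zero, Fin.val_zero, pow_zero, of_apply, if_true,
      one_mul, add_zero]
    exact ih (hx.comp Fin.strictMono_succ.monotone) (hy.comp Fin.strictMono_succ.monotone)

/-- `(y - x)₊ ^ m`, except that at `m = 0` it is the Heaviside step `[x < y]` rather than `1`. -/
noncomputable def truncatedPower (m : ℕ) (x y : ℝ) : ℝ := if x < y then (y - x) ^ m else 0

namespace truncatedPower

theorem eq_max_pow {m : ℕ} (hm : m ≠ 0) (x y : ℝ) :
    truncatedPower m x y = max (y - x) 0 ^ m := by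
  unfold truncatedPower
  split_ifs with h
  · rw [max_eq_left (sub_nonneg.2 h.le)]
  · rw [max_eq_right (sub_nonpos.2 (not_lt.1 h)), zero_pow hm]

theorem monotone (m : ℕ) (x : ℝ) : Monotone (truncatedPower m x) := by
  intro s t hst
  unfold truncatedPower
  split_ifs with hs ht ht
  · gcongr
  · exact absurd (hs.trans_le hst) ht
  · positivity
  · rfl

theorem continuous {m : ℕ} (hm : m ≠ 0) (x : ℝ) : Continuous (truncatedPower m x) := by
  simp_rw [funext (eq_max_pow hm x)]
  fun_prop

theorem hasDerivAt_succ {m : ℕ} {x y : ℝ} (hy : y ≠ x) :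
    HasDerivAt (truncatedPower (m + 1) x) ((m + 1) * truncatedPower m x y) y := by
  rcases hy.lt_or_gt with hy | hy
  · have : truncatedPower (m + 1) x =ᶠ[𝓝 y] fun _ => 0 := by
      filter_upwards [Iio_mem_nhds hy] with t ht
      simp [truncatedPower, (mem_Iio.1 ht).le.not_gt]
    simpa [truncatedPower, hy.le.not_gt] using
      (hasDerivAt_const y (0 : ℝ)).congr_of_eventuallyEq this
  · have : truncatedPower (m + 1) x =ᶠ[𝓝 y] fun t => (t - x) ^ (m + 1) := by
      filter_upwards [Ioi_mem_nhds hy] with t ht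
      simp [truncatedPower, mem_Ioi.1 ht]
    simpa [truncatedPower, hy] using
      (((hasDerivAt_id y).sub_const x).pow (m + 1)).congr_of_eventuallyEq this

theorem integral (m : ℕ) (x a b : ℝ) :
    (m + 1) * ∫ t in a..b, truncatedPower m x t =
      truncatedPower (m + 1) x b - truncatedPower (m + 1) x a := by
  rw [← intervalIntegral.integral_const_mul]
  exact integral_eq_of_hasDerivAt_off_countable _ _ (countable_singleton x)
    (continuous m.succ_ne_zero x).continuousOn (fun t ht => hasDerivAt_succ ht.2)
    ((monotone m x).intervalIntegrable.const_mul _)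

theorem det_nonneg (m : ℕ) {k : ℕ} {x y : Fin k → ℝ} (hx : Monotone x) (hy : Monotone y) :
    0 ≤ det (of fun i j => truncatedPower m (x i) (y j)) := by
  induction m generalizing y with
  | zero => simpa [truncatedPower] using det_heaviside_nonneg hx hy
  | succ m ih =>
    cases k with
    | zero => simp
    | succ n =>
    set c : Fin (n + 1) → ℝ := Fin.cons (min (x 0) (y 0)) fun j => y j.castSucc
    have hcy (l : Fin (n + 1)) : c l ≤ y l := by
      cases l using Fin.cases with
      | zero => exact min_le_right _ _
      | succ j => exact hy (Fin.castSucc_le_succ j)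
    have hc0 (i : Fin (n + 1)) : truncatedPower (m + 1) (x i) (c 0) = 0 :=
      if_neg ((min_le_left _ _).trans (hx (Fin.zero_le i))).not_gt
    have hdet : det (of fun i j => truncatedPower (m + 1) (x i) (y j)) =
        det ((m + 1 : ℝ) • of fun i l => ∫ t in c l..y l, truncatedPower m (x i) t) := by
      refine det_eq_of_forall_col_eq_smul_add_pred (fun _ => 1) (fun i => ?_) fun i j => ?_
      · simp [truncatedPower.integral, hc0]
      · simp [truncatedPower.integral, c]
    rw [hdet, det_smul]
    refine mul_nonneg (by positivity) (det_intervalIntegral_nonneg hcy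
      (fun i l => (monotone m _).intervalIntegrable) fun s hs => ih ?_)
    exact Fin.monotone_iff_le_succ.2 fun j => (hs j.castSucc).2.trans (hs j.succ).1

end truncatedPower

theorem fracIntKernel_nat_totally_positive (m : ℕ) (hm : 0 < m) (k : ℕ)
    (x y : Fin k → ℝ) (hx : StrictMono x) (hy : StrictMono y) :
    0 ≤ Matrix.det (Matrix.of fun i j => (max (y j - x i) 0) ^ m) := by
  simpa only [truncatedPower.eq_max_pow hm.ne'] using
    truncatedPower.det_nonneg m hx.monotone hy.monotone
end

section
/- For every α > 0 and k ≥ 1, the determinant of the k×k matrix with (i,j) entry Γ(i + αj) equals (∏_{j=1}^k Γ(1 + αj)) · α^(k(k-1)/2) · ∏_{1≤i<j≤k}(j - i). In particular it is strictly positive. -/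
/-!
Since `Γ(x + i) = Γ(x) · x(x+1)⋯(x+i-1)` and the rising factorial `x(x+1)⋯(x+i-1)` is a monic
polynomial of degree `i` in `x`, row operations turn the matrix `(Γ(x_j + i))` into the Vandermonde
matrix of the `x_j` with column `j` scaled by `Γ(x_j)`. For `x_j = 1 + α(j+1)` the Vandermonde
determinant is that of the progression `α·j`, namely `α^(k(k-1)/2) ∏_{j<k} j!`.
-/

open Finset Polynomial Matrix Real

theorem Real.Gamma_add_nat_eq_mul_ascPochhammer {x : ℝ} (hx : ∀ m : ℕ, x ≠ -m) (n : ℕ) :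
    Gamma (x + n) = Gamma x * (ascPochhammer ℝ n).eval x := by
  induction n with
  | zero => simp
  | succ n ih =>
    have hne : x + n ≠ 0 := fun h => hx n (by linarith)
    rw [Nat.cast_succ, ← add_assoc, Gamma_add_one hne, ih, ascPochhammer_succ_eval]
    ring

namespace Matrix

theorem det_Gamma_add_nat {n : ℕ} (x : Fin n → ℝ) (hx : ∀ j, ∀ m : ℕ, x j ≠ -m) :
    (of fun i j : Fin n => Gamma (x j + i)).det = (∏ j, Gamma (x j)) * (vandermonde x).det := by
  let P : Matrix (Fin n) (Fin n) ℝ := of fun j i => (ascPochhammer ℝ i).eval (x j)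
  have hcol : (of fun i j : Fin n => Gamma (x j + i)) = of fun i j => Gamma (x j) * Pᵀ i j := by
    ext i j
    exact Gamma_add_nat_eq_mul_ascPochhammer (hx j) i
  rw [hcol, det_mul_row, det_transpose, ← det_eval_matrixOfPolynomials_eq_det_vandermonde x
    (fun i => ascPochhammer ℝ i) (fun i => ascPochhammer_natDegree ℝ i)
    (fun i => monic_ascPochhammer ℝ i)]

theorem det_vandermonde_const_mul {R : Type*} [CommRing R] {n : ℕ} (a : R) (v : Fin n → R) :
    (vandermonde fun i => a * v i).det = a ^ (n * (n - 1) / 2) * (vandermonde v).det := by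
  have hscale : (vandermonde fun i => a * v i)
      = vandermonde v * diagonal fun j : Fin n => a ^ (j : ℕ) := by
    ext i j
    simp [vandermonde_apply, mul_pow, mul_comm]
  rw [hscale, det_mul, det_diagonal, prod_pow_eq_pow_sum, Fin.sum_univ_eq_sum_range (fun j => j),
    sum_range_id, mul_comm]

theorem det_vandermonde_natCast {R : Type*} [CommRing R] (n : ℕ) :
    (vandermonde fun i : Fin n => (i : R)).det = ∏ j ∈ range n, (j.factorial : R) := by
  cases n with
  | zero => simp
  | succ n =>
    rw [det_vandermonde_id_eq_superFactorial, ← Nat.prod_range_succ_factorial, Nat.cast_prod]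

end Matrix

theorem det_gamma_shifted_general (α : ℝ) (hα : 0 < α) (k : ℕ) :
    Matrix.det (Matrix.of fun i j : Fin k =>
        Real.Gamma ((i.val + 1 : ℝ) + α * (j.val + 1)))
      = (∏ j ∈ Finset.range k, Real.Gamma (1 + α * (j + 1))) *
          α ^ (k * (k - 1) / 2) * ∏ j ∈ Finset.range k, (Nat.factorial j : ℝ) ∧
    0 < Matrix.det (Matrix.of fun i j : Fin k =>
        Real.Gamma ((i.val + 1 : ℝ) + α * (j.val + 1))) := by
  set x : Fin k → ℝ := fun j => α * j + (1 + α)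
  have hx : ∀ j, ∀ m : ℕ, x j ≠ -m := fun j m => by
    have : (0 : ℝ) ≤ m := m.cast_nonneg
    have : 0 < x j := by positivity
    linarith
  have hmatrix : (of fun i j : Fin k => Gamma ((i.val + 1 : ℝ) + α * (j.val + 1)))
      = of fun i j : Fin k => Gamma (x j + i) := by
    ext i j
    simp only [x, of_apply]
    ring_nf
  have hdet : (of fun i j : Fin k => Gamma ((i.val + 1 : ℝ) + α * (j.val + 1))).det
      = (∏ j ∈ range k, Gamma (1 + α * (j + 1))) *
          α ^ (k * (k - 1) / 2) * ∏ j ∈ range k, (j.factorial : ℝ) := by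
    rw [hmatrix, det_Gamma_add_nat x hx, det_vandermonde_add, det_vandermonde_const_mul,
      det_vandermonde_natCast, Fin.prod_univ_eq_prod_range (fun j => Gamma (α * j + (1 + α))),
      mul_assoc]
    congr 2
    ring_nf
  refine ⟨hdet, hdet ▸ ?_⟩
  have hGamma : 0 < ∏ j ∈ range k, Gamma (1 + α * (j + 1)) :=
    prod_pos fun j _ => Gamma_pos_of_pos (by positivity)
  have hfact : 0 < ∏ j ∈ range k, (j.factorial : ℝ) := prod_pos fun j _ => by positivity
  positivity

theorem det_gamma_shifted (α : ℝ) (hα : 0 < α) (k : ℕ) (hk : 1 ≤ k) :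
    Matrix.det (Matrix.of fun i j : Fin k =>
        Real.Gamma ((i.val + 1 : ℝ) + α * (j.val + 1)))
      = (∏ j ∈ Finset.range k, Real.Gamma (1 + α * (j + 1))) *
          α ^ (k * (k - 1) / 2) * ∏ j ∈ Finset.range k, (Nat.factorial j : ℝ) ∧
    0 < Matrix.det (Matrix.of fun i j : Fin k =>
        Real.Gamma ((i.val + 1 : ℝ) + α * (j.val + 1))) :=
  det_gamma_shifted_general α hα k
end

section
/- For every α > 0 and k ≥ 2, ∑_{σ ∈ S_k} det[Γ(j + σ(i)α) · ∏_{r=1}^{i-1}(r + σ(i)α)]_{1≤i,j≤k} = α^(k(k-1)) · ∏_{j=1}^k ((j-1)!)² · Γ(1 + αj), which is strictly positive. -/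
open Finset Polynomial

noncomputable def pfam (j : ℕ) : ℝ[X] := ∏ s ∈ Finset.range j, (X + C ((s:ℝ)+1))

lemma pfam_monic (j : ℕ) : (pfam j).Monic :=
  monic_prod_of_monic _ _ fun s _ => monic_X_add_C _

lemma pfam_natDegree (j : ℕ) : (pfam j).natDegree = j := by
  rw [pfam, natDegree_prod_of_monic _ _ fun s _ => monic_X_add_C _]
  simp only [natDegree_X_add_C, Finset.sum_const, Finset.card_range, smul_eq_mul, mul_one]

lemma pfam_eval (j : ℕ) (x : ℝ) :
    (pfam j).eval x = ∏ s ∈ Finset.range j, (x + ((s:ℝ)+1)) := by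
  simp [pfam, eval_prod]

lemma det_poly_eval {k : ℕ} (v : Fin k → ℝ) :
    Matrix.det (Matrix.of fun i j : Fin k => ∏ s ∈ Finset.range j.val, (v i + ((s:ℝ)+1)))
      = (Matrix.vandermonde v).det := by
  rw [Matrix.det_eval_matrixOfPolynomials_eq_det_vandermonde v (fun j => pfam j.val)
    (fun i => pfam_natDegree i.val) (fun i => pfam_monic i.val)]
  congr 1
  ext i j
  simp [pfam_eval]

lemma gamma_shift (x : ℝ) (hx : 0 < x) (j : ℕ) :
    Real.Gamma ((j:ℝ) + 1 + x) = Real.Gamma (1 + x) * ∏ s ∈ Finset.range j, ((s:ℝ) + 1 + x) := by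
  induction j with
  | zero => simp
  | succ n ih =>
    have h : ((n:ℝ) + 1 + x) ≠ 0 := by positivity
    have e : ((n+1:ℕ):ℝ) + 1 + x = ((n:ℝ)+1+x) + 1 := by push_cast; ring
    rw [e, Real.Gamma_add_one h, ih, Finset.prod_range_succ]
    ring
open Finset

lemma prod_Ioi_sub (k : ℕ) (i : Fin k) :
    ∏ j ∈ Finset.Ioi i, ((j:ℝ) - (i:ℝ)) = (Nat.factorial (k - 1 - i.val) : ℝ) := by
  rw [← Finset.prod_range_add_one_eq_factorial, Nat.cast_prod]
  refine Finset.prod_bij (fun j _ => j.val - i.val - 1) ?_ ?_ ?_ ?_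
  · intro j hj
    simp only [Finset.mem_Ioi, Fin.lt_def] at hj
    have := j.isLt
    simp only [Finset.mem_range]
    omega
  · intro a ha b hb hab
    simp only [Finset.mem_Ioi, Fin.lt_def] at ha hb
    ext
    omega
  · intro b hb
    simp only [Finset.mem_range] at hb
    refine ⟨⟨i.val + 1 + b, by have := i.isLt; omega⟩, ?_, by dsimp only; omega⟩
    simp only [Finset.mem_Ioi, Fin.lt_def]
    omega
  · intro j hj
    simp only [Finset.mem_Ioi, Fin.lt_def] at hj
    have h1 : ((j.val - i.val - 1 : ℕ) : ℝ) = (j.val : ℝ) - (i.val : ℝ) - 1 := by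
      rw [Nat.cast_sub (by omega), Nat.cast_sub (by omega)]
      push_cast; ring
    push_cast [h1]
    ring

lemma W_val (k : ℕ) :
    ∏ i : Fin k, ∏ j ∈ Finset.Ioi i, ((j:ℝ) - (i:ℝ)) = ∏ m ∈ Finset.range k, (Nat.factorial m : ℝ) := by
  rw [Finset.prod_congr rfl fun i _ => prod_Ioi_sub k i]
  rw [Fin.prod_univ_eq_prod_range (fun t => (Nat.factorial (k - 1 - t) : ℝ))]
  exact Finset.prod_range_reflect (fun m => (Nat.factorial m : ℝ)) k
open Finset

lemma card_sum (k : ℕ) : (∑ i : Fin k, (Finset.Ioi i).card) * 2 = k * (k - 1) := by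
  have h1 : ∑ i : Fin k, (Finset.Ioi i).card = ∑ t ∈ Finset.range k, (k - 1 - t) := by
    rw [Finset.sum_congr rfl (fun (i : Fin k) _ => Fin.card_Ioi i)]
    exact Fin.sum_univ_eq_sum_range (fun t => k - 1 - t) k
  have h2 : ∑ t ∈ Finset.range k, (k - 1 - t) = ∑ t ∈ Finset.range k, t := by
    have := Finset.sum_range_reflect (fun t => t) k
    simpa using this
  rw [h1, h2, Finset.sum_range_id_mul_two]

theorem perm_sum_det_gamma (α : ℝ) (hα : 0 < α) (k : ℕ) (hk : 2 ≤ k) :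
    (∑ σ : Equiv.Perm (Fin k),
        Matrix.det (Matrix.of fun i j : Fin k =>
          Real.Gamma ((j.val + 1 : ℝ) + ((σ i).val + 1) * α) *
            ∏ r ∈ Finset.range i.val, ((r : ℝ) + 1 + ((σ i).val + 1) * α)))
      = α ^ (k * (k - 1)) *
          ∏ j ∈ Finset.range k, ((Nat.factorial j : ℝ) ^ 2 * Real.Gamma (1 + α * (j + 1))) ∧
    0 < α ^ (k * (k - 1)) *
          ∏ j ∈ Finset.range k, ((Nat.factorial j : ℝ) ^ 2 * Real.Gamma (1 + α * (j + 1))) := by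
  constructor
  · -- main identity
    set v : Fin k → ℝ := fun m => ((m.val : ℝ) + 1) * α with hv
    have hvpos : ∀ m : Fin k, 0 < v m := fun m => by
      have : (0:ℝ) < (m.val : ℝ) + 1 := by positivity
      exact mul_pos this hα
    set V : ℝ := (Matrix.vandermonde v).det with hV
    -- step 1 : per-permutation determinant
    have step1 : ∀ σ : Equiv.Perm (Fin k),
        Matrix.det (Matrix.of fun i j : Fin k =>
          Real.Gamma ((j.val + 1 : ℝ) + ((σ i).val + 1) * α) *
            ∏ r ∈ Finset.range i.val, ((r : ℝ) + 1 + ((σ i).val + 1) * α))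
        = ((Equiv.Perm.sign σ : ℤ) : ℝ) *
          (∏ i : Fin k, (Real.Gamma (1 + v (σ i)) *
            ∏ r ∈ Finset.range i.val, ((r : ℝ) + 1 + v (σ i)))) * V := by
      intro σ
      set A : Matrix (Fin k) (Fin k) ℝ := Matrix.of
        (fun i j : Fin k => ∏ s ∈ Finset.range j.val, (v (σ i) + ((s:ℝ) + 1))) with hA
      have hmat : (Matrix.of fun i j : Fin k =>
          Real.Gamma ((j.val + 1 : ℝ) + ((σ i).val + 1) * α) *
            ∏ r ∈ Finset.range i.val, ((r : ℝ) + 1 + ((σ i).val + 1) * α))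
          = Matrix.of fun i j : Fin k =>
            (Real.Gamma (1 + v (σ i)) * ∏ r ∈ Finset.range i.val, ((r : ℝ) + 1 + v (σ i))) *
              A i j := by
        ext i j
        simp only [hA, Matrix.of_apply]
        have hx : (0:ℝ) < v (σ i) := hvpos _
        have e1 : ((j.val : ℝ) + 1) + ((σ i).val + 1) * α = (j.val : ℝ) + 1 + v (σ i) := by
          simp [hv]
        rw [e1, gamma_shift (v (σ i)) hx j.val]
        have e2 : ∏ s ∈ Finset.range j.val, ((s:ℝ) + 1 + v (σ i))
            = ∏ s ∈ Finset.range j.val, (v (σ i) + ((s:ℝ) + 1)) :=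
          Finset.prod_congr rfl fun s _ => by ring
        have e3 : ∏ r ∈ Finset.range i.val, ((r : ℝ) + 1 + ((σ i).val + 1) * α)
            = ∏ r ∈ Finset.range i.val, ((r : ℝ) + 1 + v (σ i)) :=
          Finset.prod_congr rfl fun r _ => by simp [hv]
        rw [e2, e3]
        ring
      rw [hmat, Matrix.det_mul_column
        (fun i : Fin k => Real.Gamma (1 + v (σ i)) * ∏ r ∈ Finset.range i.val, ((r : ℝ) + 1 + v (σ i)))
        A]
      have h2 : A.det = (Matrix.vandermonde (v ∘ σ)).det := det_poly_eval (v ∘ σ)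
      have h3 : Matrix.vandermonde (v ∘ σ) = (Matrix.vandermonde v).submatrix σ id := by
        ext i j; rfl
      rw [h2, h3, Matrix.det_permute]
      push_cast
      ring
    rw [Finset.sum_congr rfl fun σ _ => step1 σ]
    -- step 2 : the remaining sum is a determinant
    set B : Matrix (Fin k) (Fin k) ℝ := Matrix.of fun m i : Fin k =>
      Real.Gamma (1 + v m) * ∏ r ∈ Finset.range i.val, ((r : ℝ) + 1 + v m) with hB
    have step2 : ∑ σ : Equiv.Perm (Fin k),
        ((Equiv.Perm.sign σ : ℤ) : ℝ) *
          (∏ i : Fin k, (Real.Gamma (1 + v (σ i)) *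
            ∏ r ∈ Finset.range i.val, ((r : ℝ) + 1 + v (σ i)))) * V
        = B.det * V := by
      rw [Matrix.det_apply]
      rw [Finset.sum_mul]
      refine Finset.sum_congr rfl fun σ _ => ?_
      simp only [hB, Matrix.of_apply, Units.smul_def, zsmul_eq_mul]
    rw [step2]
    -- step 3 : compute det B
    have step3 : B.det = (∏ m : Fin k, Real.Gamma (1 + v m)) * V := by
      set A2 : Matrix (Fin k) (Fin k) ℝ := Matrix.of
        (fun m i : Fin k => ∏ s ∈ Finset.range i.val, (v m + ((s:ℝ) + 1))) with hA2
      have hBm : B = Matrix.of fun m i : Fin k =>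
          Real.Gamma (1 + v m) * A2 m i := by
        ext m i
        simp only [hB, hA2, Matrix.of_apply]
        exact congrArg _ (Finset.prod_congr rfl fun s _ => by ring)
      rw [hBm, Matrix.det_mul_column (fun m : Fin k => Real.Gamma (1 + v m)) A2]
      rw [hA2, det_poly_eval v]
    rw [step3]
    -- step 4 : compute V * V
    have hVval : V = (∏ i : Fin k, α ^ (Finset.Ioi i).card) *
        ∏ i : Fin k, ∏ j ∈ Finset.Ioi i, ((j:ℝ) - (i:ℝ)) := by
      rw [hV, Matrix.det_vandermonde, ← Finset.prod_mul_distrib]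
      refine Finset.prod_congr rfl fun i _ => ?_
      rw [← Finset.prod_const, ← Finset.prod_mul_distrib]
      refine Finset.prod_congr rfl fun j _ => ?_
      simp only [hv]
      push_cast
      ring
    have hVV : V * V = α ^ (k * (k - 1)) * ∏ m ∈ Finset.range k, ((Nat.factorial m : ℝ))^2 := by
      rw [hVval, W_val k]
      rw [Finset.prod_pow_eq_pow_sum]
      rw [show ∀ a b : ℝ, a ^ (∑ i : Fin k, (Finset.Ioi i).card) * b * (a ^ (∑ i : Fin k, (Finset.Ioi i).card) * b) = a ^ ((∑ i : Fin k, (Finset.Ioi i).card) * 2) * b ^ 2 from fun a b => by rw [pow_mul]; ring]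
      rw [card_sum k, Finset.prod_pow]
    -- finish
    calc (∏ m : Fin k, Real.Gamma (1 + v m)) * V * V
        = (V * V) * ∏ m : Fin k, Real.Gamma (1 + v m) := by ring
      _ = (α ^ (k * (k - 1)) * ∏ m ∈ Finset.range k, ((Nat.factorial m : ℝ))^2) *
            ∏ m ∈ Finset.range k, Real.Gamma (1 + α * ((m:ℝ) + 1)) := by
          rw [hVV]
          congr 1
          rw [Fin.prod_univ_eq_prod_range (fun m => Real.Gamma (1 + ((m:ℝ) + 1) * α)) k]
          exact Finset.prod_congr rfl fun m _ => by rw [mul_comm ((m:ℝ)+1) α]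
      _ = α ^ (k * (k - 1)) *
          ∏ j ∈ Finset.range k, ((Nat.factorial j : ℝ) ^ 2 * Real.Gamma (1 + α * (j + 1))) := by
          rw [Finset.prod_mul_distrib]
          ring
  · refine mul_pos (pow_pos hα _) (Finset.prod_pos fun j _ => mul_pos ?_ ?_)
    · exact pow_pos (by exact_mod_cast Nat.factorial_pos j) 2
    · exact Real.Gamma_pos_of_pos (by positivity)
end

section
/- Let ρ ∈ (0,1) and n ≥ 2 be an integer such that 1/ρ < n and 1/ρ is not an integer. Then there exists k ∈ {2,...,n} such that ∏_{j=1}^k sin(π j ρ) < 0. -/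
open Real Finset

theorem sin_product_sign_obstruction (ρ : ℝ) (hρ : ρ ∈ Set.Ioo (0:ℝ) 1)
    (n : ℕ) (hn : 2 ≤ n) (hlt : 1 / ρ < n) (hnotint : ¬ ∃ m : ℕ, 1 / ρ = m) :
    ∃ k : ℕ, 2 ≤ k ∧ k ≤ n ∧
      (∏ j ∈ Finset.Icc 1 k, Real.sin (π * j * ρ)) < 0 := by
  obtain ⟨hρ0, hρ1⟩ := hρ
  have hinv1 : (1:ℝ) < 1 / ρ := by rw [lt_div_iff₀ hρ0]; linarith
  set m : ℕ := ⌊1 / ρ⌋₊ with hm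
  have hinvpos : (0:ℝ) ≤ 1 / ρ := by positivity
  have hfloor_le : (m : ℝ) ≤ 1 / ρ := Nat.floor_le hinvpos
  have hfloor_lt : (m : ℝ) < 1 / ρ := lt_of_le_of_ne hfloor_le (by
    intro h; exact hnotint ⟨m, h.symm⟩)
  have hlt_succ : 1 / ρ < m + 1 := Nat.lt_floor_add_one _
  have hm1 : 1 ≤ m := Nat.le_floor (by push_cast; linarith)
  refine ⟨m + 1, by omega, ?_, ?_⟩
  · have : (m : ℝ) < n := lt_trans hfloor_lt hlt
    have hmn : m < n := by exact_mod_cast this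
    omega
  · rw [Finset.prod_Icc_succ_top (by omega : 1 ≤ m + 1)]
    have hpos : 0 < ∏ j ∈ Finset.Icc 1 m, Real.sin (π * j * ρ) := by
      apply Finset.prod_pos
      intro j hj
      obtain ⟨hj1, hjm⟩ := Finset.mem_Icc.mp hj
      apply Real.sin_pos_of_pos_of_lt_pi
      · have : (0:ℝ) < j := by exact_mod_cast hj1
        positivity
      · have hjρ : (j : ℝ) * ρ < 1 := by
          have : (j : ℝ) ≤ m := by exact_mod_cast hjm
          have hlt' : (j : ℝ) < 1 / ρ := lt_of_le_of_lt this hfloor_lt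
          calc (j:ℝ) * ρ < (1/ρ) * ρ := by nlinarith
            _ = 1 := by field_simp
        calc π * j * ρ = π * ((j:ℝ) * ρ) := by ring
          _ < π * 1 := by nlinarith [Real.pi_pos]
          _ = π := by ring
    have hneg : Real.sin (π * ((m:ℝ)+1) * ρ) < 0 := by
      have h1 : (1:ℝ) < ((m:ℝ)+1) * ρ := by
        have : 1/ρ < (m:ℝ)+1 := hlt_succ
        calc (1:ℝ) = (1/ρ) * ρ := by field_simp
          _ < ((m:ℝ)+1) * ρ := by nlinarith
      have hmρ : (m:ℝ) * ρ < 1 := by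
        calc (m:ℝ) * ρ < (1/ρ) * ρ := by nlinarith
          _ = 1 := by field_simp
      have h2 : ((m:ℝ)+1) * ρ < 2 := by nlinarith
      have hs := Real.sin_sub_pi (π * ((m:ℝ)+1) * ρ)
      have : Real.sin (π * ((m:ℝ)+1) * ρ) = - Real.sin (π * ((m:ℝ)+1) * ρ - π) := by
        linarith
      rw [this, neg_lt_zero]
      apply Real.sin_pos_of_pos_of_lt_pi <;> nlinarith [Real.pi_pos]
    have : ((m:ℕ)+1 : ℕ) = ((m:ℝ)+1 : ℝ) := by push_cast; ring
    push_cast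
    nlinarith
end

section
/- For α ∈ (0,1), the function s ↦ Γ(1 + is)/Γ(1 + iαs) (where Γ is the complex Gamma function and i the imaginary unit) is integrable over ℝ; moreover |Γ(1+is)/Γ(1+iαs)| = O(|s|^{1/2 - 1/(2α)} · e^{-π(1-α)|s|/2})-type decay, in particular it tends to 0 faster than any polynomial as |s| → ∞. -/
/-!
By the reflection formula, `|Γ(1 + it)|² = πt / sinh(πt)`, so
`|Γ(1 + is) / Γ(1 + iαs)|² = sinh(πα|s|) / (α sinh(π|s|)) ≤ C e^{-π(1-α)|s|}` for `|s| ≥ 1`.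
The ratio is therefore continuous and `O(e^{-π(1-α)|s|/2})` at infinity, which gives both
integrability and decay faster than any power of `|s|`.
-/

open Complex MeasureTheory Filter Asymptotics Set
open scoped Real Topology

theorem Real.integrable_exp_neg_mul_abs {b : ℝ} (hb : 0 < b) :
    Integrable fun x : ℝ => Real.exp (-b * |x|) := by
  have hIoi : IntegrableOn (fun x : ℝ => Real.exp (-b * |x|)) (Ioi 0) :=
    (exp_neg_integrableOn_Ioi 0 hb).congr_fun (fun x hx => by rw [abs_of_pos hx])
      measurableSet_Ioi
  have hIci : IntegrableOn (fun x : ℝ => Real.exp (-b * |x|)) (Ici (-0)) :=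
    (integrableOn_Ici_iff_integrableOn_Ioi (by simp)).2 (by simpa using hIoi)
  have hIic : IntegrableOn (fun x : ℝ => Real.exp (-b * |x|)) (Iic 0) := by
    simpa only [abs_neg] using hIci.comp_neg_Iic
  rw [← integrableOn_univ, ← Iic_union_Ioi (a := (0 : ℝ))]
  exact hIic.union hIoi

theorem tendsto_abs_pow_mul_norm_of_isBigO_exp_neg_mul_abs {E : Type*} [NormedAddCommGroup E]
    {f : ℝ → E} {b : ℝ} (hb : 0 < b) (hf : f =O[cocompact ℝ] fun s => Real.exp (-b * |s|))
    (n : ℕ) : Tendsto (fun s => |s| ^ n * ‖f s‖) (cocompact ℝ) (𝓝 0) := by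
  have hexp : Tendsto (fun s : ℝ => |s| ^ n * Real.exp (-b * |s|)) (cocompact ℝ) (𝓝 0) := by
    simpa [Function.comp_def] using
      (tendsto_rpow_mul_exp_neg_mul_atTop_nhds_zero n b hb).comp
        (tendsto_norm_cocompact_atTop (E := ℝ))
  exact ((isBigO_refl (fun s : ℝ => |s| ^ n) _).mul hf.norm_left).trans_tendsto hexp

theorem Real.sinh_le_exp_div_two (x : ℝ) : Real.sinh x ≤ Real.exp x / 2 := by
  rw [Real.sinh_eq]
  linarith [Real.exp_pos (-x)]

theorem Real.exp_mul_one_sub_exp_neg_two_mul_div_two_le_sinh {c x : ℝ} (h : c ≤ x) :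
    Real.exp x * (1 - Real.exp (-2 * c)) / 2 ≤ Real.sinh x := by
  have : Real.exp (-x) ≤ Real.exp x * Real.exp (-2 * c) := by
    rw [← Real.exp_add, Real.exp_le_exp]
    linarith
  rw [Real.sinh_eq]
  linarith

namespace Complex

theorem differentiableAt_Gamma_of_re_pos {z : ℂ} (hz : 0 < z.re) :
    DifferentiableAt ℂ Gamma z :=
  differentiableAt_Gamma z fun m hm => by
    have := congrArg re hm
    simp only [neg_re, natCast_re] at this
    linarith [m.cast_nonneg (α := ℝ)]

theorem continuous_Gamma_one_add_I_mul : Continuous fun t : ℝ => Gamma (1 + I * t) :=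
  continuous_iff_continuousAt.2 fun _ =>
    (differentiableAt_Gamma_of_re_pos (by simp)).continuousAt.comp (by fun_prop)

theorem Gamma_one_add_I_mul_ne_zero (t : ℝ) : Gamma (1 + I * t) ≠ 0 :=
  Gamma_ne_zero_of_re_pos (by simp)

-- Euler's reflection formula at `z = I t`, with `Γ(1 - I t) = conj Γ(1 + I t)`.
theorem norm_Gamma_one_add_I_mul_sq {t : ℝ} (ht : t ≠ 0) :
    ‖Gamma (1 + I * t)‖ ^ 2 = π * t / Real.sinh (π * t) := by
  have hconj : (starRingEnd ℂ) (1 + I * t) = 1 - I * t := by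
    simp [Complex.ext_iff]
  have hsq : (‖Gamma (1 + I * t)‖ ^ 2 : ℂ) = Gamma (1 + I * t) * Gamma (1 - I * t) := by
    rw [← hconj, Gamma_conj, mul_conj, normSq_eq_norm_sq]
    norm_cast
  have hshift : Gamma (1 + I * t) = I * t * Gamma (I * t) := by
    rw [add_comm]
    exact Gamma_add_one _ (by simpa using ht)
  have hsin : sin (π * (I * t)) = Real.sinh (π * t) * I := by
    rw [show (π : ℂ) * (I * t) = ((π * t : ℝ) : ℂ) * I by push_cast; ring, sin_mul_I,
      ofReal_sinh]
  have hsinh : Real.sinh (π * t) ≠ 0 := by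
    simp [Real.sinh_eq_zero, Real.pi_ne_zero, ht]
  have : (‖Gamma (1 + I * t)‖ ^ 2 : ℂ) = ((π * t / Real.sinh (π * t) : ℝ) : ℂ) := by
    rw [hsq, hshift, mul_assoc, Gamma_mul_Gamma_one_sub, hsin]
    push_cast
    field_simp
  exact_mod_cast this

theorem norm_Gamma_one_add_I_mul_sq_eq_abs {t : ℝ} (ht : t ≠ 0) :
    ‖Gamma (1 + I * t)‖ ^ 2 = π * |t| / Real.sinh (π * |t|) := by
  rw [norm_Gamma_one_add_I_mul_sq ht]
  rcases abs_choice t with h | h <;> simp only [h, mul_neg, Real.sinh_neg, neg_div_neg_eq]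

end Complex

noncomputable def gammaRatio (α s : ℝ) : ℂ :=
  Gamma (1 + I * s) / Gamma (1 + I * (α * s))

theorem continuous_gammaRatio (α : ℝ) : Continuous (gammaRatio α) := by
  have hα : Continuous fun s : ℝ => Gamma (1 + I * (α * s)) := by
    simpa [Function.comp_def] using continuous_Gamma_one_add_I_mul.comp (continuous_const_mul α)
  exact continuous_Gamma_one_add_I_mul.div hα fun s => by
    simpa using Gamma_one_add_I_mul_ne_zero (α * s)

theorem norm_gammaRatio_sq {α s : ℝ} (hα : 0 < α) (hs : s ≠ 0) :
    ‖gammaRatio α s‖ ^ 2 = Real.sinh (π * (α * |s|)) / (α * Real.sinh (π * |s|)) := by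
  have hαs : ((α * s : ℝ) : ℂ) = α * s := by push_cast; rfl
  rw [gammaRatio, norm_div, div_pow, norm_Gamma_one_add_I_mul_sq_eq_abs hs, ← hαs,
    norm_Gamma_one_add_I_mul_sq_eq_abs (mul_ne_zero hα.ne' hs), abs_mul, abs_of_pos hα]
  have : 0 < Real.sinh (π * |s|) := by positivity
  have : 0 < Real.sinh (π * (α * |s|)) := by positivity
  field_simp

theorem norm_gammaRatio_sq_le {α s : ℝ} (hα : 0 < α) (hs : 1 ≤ |s|) :
    ‖gammaRatio α s‖ ^ 2 ≤
      (α * (1 - Real.exp (-2 * π)))⁻¹ * Real.exp (-(π * (1 - α)) * |s|) := by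
  have hK : 0 < 1 - Real.exp (-2 * π) := by
    rw [sub_pos, Real.exp_lt_one_iff]
    linarith [Real.pi_pos]
  rw [norm_gammaRatio_sq hα (abs_pos.1 (by linarith))]
  calc Real.sinh (π * (α * |s|)) / (α * Real.sinh (π * |s|))
      ≤ (Real.exp (π * (α * |s|)) / 2) /
          (α * (Real.exp (π * |s|) * (1 - Real.exp (-2 * π)) / 2)) := by
        gcongr
        · exact Real.sinh_le_exp_div_two _
        · exact Real.exp_mul_one_sub_exp_neg_two_mul_div_two_le_sinh (by nlinarith [Real.pi_pos])
    _ = _ := by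
        rw [show -(π * (1 - α)) * |s| = π * (α * |s|) - π * |s| by ring, Real.exp_sub]
        field_simp

theorem gammaRatio_isBigO_exp_neg_mul_abs {α : ℝ} (hα : 0 < α) :
    gammaRatio α =O[cocompact ℝ] fun s => Real.exp (-(π * (1 - α) / 2) * |s|) := by
  refine IsBigO.of_pow two_ne_zero (IsBigO.of_bound (α * (1 - Real.exp (-2 * π)))⁻¹ ?_)
  filter_upwards [(tendsto_norm_cocompact_atTop (E := ℝ)).eventually_ge_atTop 1] with s hs
  rw [Pi.pow_apply, Pi.pow_apply, norm_pow, norm_pow, Real.norm_of_nonneg (Real.exp_pos _).le,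
    ← Real.exp_nat_mul]
  convert norm_gammaRatio_sq_le hα hs using 3
  push_cast
  ring

theorem gamma_ratio_integrable_and_rapid_decay (α : ℝ) (hα : α ∈ Set.Ioo (0:ℝ) 1) :
    Integrable (fun s : ℝ =>
        Complex.Gamma (1 + Complex.I * s) / Complex.Gamma (1 + Complex.I * (α * s))) ∧
      ∀ n : ℕ, Tendsto (fun s : ℝ =>
          |s| ^ n *
            ‖Complex.Gamma (1 + Complex.I * s)
              / Complex.Gamma (1 + Complex.I * (α * s))‖)
        (Filter.cocompact ℝ) (nhds 0) := by
  obtain ⟨hα0, hα1⟩ := hα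
  have hB : 0 < π * (1 - α) / 2 := by nlinarith [Real.pi_pos]
  have hO := gammaRatio_isBigO_exp_neg_mul_abs hα0
  exact ⟨(continuous_gammaRatio α).locallyIntegrable.integrable_of_isBigO_cocompact hO
      ((Real.integrable_exp_neg_mul_abs hB).integrableAtFilter _),
    tendsto_abs_pow_mul_norm_of_isBigO_exp_neg_mul_abs hB hO⟩
end

section
/- The standard Cauchy density f(x) = 1/(π(1+x²)) is bell-shaped of all orders: for every n ≥ 0, its n-th derivative f^(n) vanishes at exactly n points of ℝ and changes sign at each of them. -/
open Real Set

/-!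
Put `θ = arccot x ∈ (0, π)`. Then `1 / (1 + x²) = sin² θ` and `dθ/dx = -sin² θ`, so the
derivative of `sin^m θ · sin (m θ)` is `-m sin^(m+1) θ · sin ((m+1) θ)` by the addition formula.
Hence `f⁽ⁿ⁾ = (-1)ⁿ n! / π · sin^(n+1) θ · sin ((n+1) θ)`, whose zeros are the `n` points with
`θ = k π / (n + 1)`, `1 ≤ k ≤ n`; since `θ` is strictly monotone in `x`, `sin ((n+1) θ)` changes
sign at each of them.
-/

noncomputable def arccot (x : ℝ) : ℝ := π / 2 - arctan x

lemma arccot_mem_Ioo (x : ℝ) : arccot x ∈ Ioo 0 π := by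
  constructor <;> linarith [arctan_lt_pi_div_two x, neg_pi_div_two_lt_arctan x, arccot.eq_1 x]

lemma strictAnti_arccot : StrictAnti arccot :=
  fun _ _ h => sub_lt_sub_left (arctan_strictMono h) _

lemma continuous_arccot : Continuous arccot :=
  continuous_const.sub continuous_arctan

lemma tan_pi_div_two_sub_arccot (x : ℝ) : tan (π / 2 - arccot x) = x := by
  simp [arccot, tan_arctan]

lemma arccot_tan_pi_div_two_sub {θ : ℝ} (hθ : θ ∈ Ioo 0 π) : arccot (tan (π / 2 - θ)) = θ := by
  rw [arccot, arctan_tan] <;> linarith [hθ.1, hθ.2]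

lemma sin_arccot (x : ℝ) : sin (arccot x) = cos (arctan x) :=
  sin_pi_div_two_sub _

lemma hasDerivAt_arccot (x : ℝ) : HasDerivAt arccot (-sin (arccot x) ^ 2) x := by
  rw [sin_arccot, cos_sq_arctan]
  exact (hasDerivAt_arctan x).const_sub (π / 2)

/-- `cauchyHarmonic m x = Im ((x - i)⁻ᵐ)`, as `(x - i)⁻¹ = sin θ · e^{iθ}` for `θ = arccot x`. -/
noncomputable def cauchyHarmonic (m : ℕ) (x : ℝ) : ℝ :=
  sin (arccot x) ^ m * sin (m * arccot x)

lemma hasDerivAt_cauchyHarmonic (m : ℕ) (x : ℝ) :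
    HasDerivAt (cauchyHarmonic (m + 1)) (-(m + 1) * cauchyHarmonic (m + 2) x) x := by
  have hθ := hasDerivAt_arccot x
  refine ((hθ.sin.fun_pow (m + 1)).fun_mul (hθ.const_mul ((m + 1 : ℕ) : ℝ)).sin).congr_deriv ?_
  rw [cauchyHarmonic, Nat.add_sub_cancel,
    show ((m + 2 : ℕ) : ℝ) * arccot x = (m + 1 : ℕ) * arccot x + arccot x by push_cast; ring,
    sin_add]
  push_cast
  ring

lemma iteratedDeriv_cauchy_density (n : ℕ) :
    iteratedDeriv n (fun t : ℝ => 1 / (π * (1 + t ^ 2))) =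
      fun x => (-1) ^ n * n.factorial / π * cauchyHarmonic (n + 1) x := by
  induction n with
  | zero =>
    ext x
    rw [iteratedDeriv_zero, zero_add, cauchyHarmonic, Nat.cast_one, one_mul, pow_one, ← sq,
      sin_arccot, cos_sq_arctan, pow_zero, Nat.factorial_zero, Nat.cast_one]
    field_simp
  | succ n ih =>
    ext x
    rw [iteratedDeriv_succ, ih, ((hasDerivAt_cauchyHarmonic n x).const_mul _).deriv]
    push_cast [Nat.factorial_succ]
    ring

def SignChangesAt (g : ℝ → ℝ) (x : ℝ) : Prop :=
  ∃ ε > 0, ∀ y z, x - ε < y → y < x → x < z → z < x + ε → g y * g z < 0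

lemma SignChangesAt.pos_mul {g a : ℝ → ℝ} {x : ℝ} (hg : SignChangesAt g x) (ha : ∀ y, 0 < a y) :
    SignChangesAt (fun t => a t * g t) x := by
  obtain ⟨ε, hε, h⟩ := hg
  refine ⟨ε, hε, fun y z hy hyx hxz hz => ?_⟩
  calc a y * g y * (a z * g z) = a y * a z * (g y * g z) := by ring
    _ < 0 := mul_neg_of_pos_of_neg (mul_pos (ha y) (ha z)) (h y z hy hyx hxz hz)

lemma SignChangesAt.const_mul {g : ℝ → ℝ} {x c : ℝ} (hg : SignChangesAt g x) (hc : c ≠ 0) :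
    SignChangesAt (fun t => c * g t) x := by
  obtain ⟨ε, hε, h⟩ := hg
  refine ⟨ε, hε, fun y z hy hyx hxz hz => ?_⟩
  calc c * g y * (c * g z) = c ^ 2 * (g y * g z) := by ring
    _ < 0 := mul_neg_of_pos_of_neg (by positivity) (h y z hy hyx hxz hz)

lemma sin_mul_sin_neg_of_mem_Ioo {k : ℤ} {s t : ℝ} (hs : s ∈ Ioo (k * π) (k * π + π))
    (ht : t ∈ Ioo (k * π - π) (k * π)) : sin s * sin t < 0 := by
  have hs' := sin_pos_of_pos_of_lt_pi (x := s - k * π) (by linarith [hs.1]) (by linarith [hs.2])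
  have ht' := sin_neg_of_neg_of_neg_pi_lt (x := t - k * π) (by linarith [ht.2]) (by linarith [ht.1])
  rw [sin_sub_int_mul_pi] at hs' ht'
  have hsign : ((-1 : ℝ) ^ k) ^ 2 = 1 := by
    rw [← zpow_natCast, ← zpow_mul, mul_comm, zpow_mul]; norm_num
  calc sin s * sin t = (-1) ^ k * sin s * ((-1) ^ k * sin t) := by
        linear_combination (-(sin s * sin t)) * hsign
    _ < 0 := mul_neg_of_pos_of_neg hs' ht'

lemma signChangesAt_sin_comp {u : ℝ → ℝ} {x : ℝ} (hu : StrictAnti u) (hux : ContinuousAt u x)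
    (hx : sin (u x) = 0) : SignChangesAt (fun t => sin (u t)) x := by
  obtain ⟨k, hk⟩ := sin_eq_zero_iff.mp hx
  obtain ⟨ε, hε, hnear⟩ := Metric.continuousAt_iff.mp hux π pi_pos
  have hclose : ∀ w, x - ε < w → w < x + ε → |u w - u x| < π := fun w h₁ h₂ =>
    hnear (by rw [dist_eq, abs_sub_lt_iff]; constructor <;> linarith)
  refine ⟨ε, hε, fun y z hy hyx hxz hz => sin_mul_sin_neg_of_mem_Ioo (k := k) ⟨?_, ?_⟩ ⟨?_, ?_⟩⟩
  · linarith [hu hyx]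
  · linarith [(abs_sub_lt_iff.mp (hclose y hy (by linarith))).1]
  · linarith [(abs_sub_lt_iff.mp (hclose z (by linarith) hz)).2]
  · linarith [hu hxz]

noncomputable def cotZeros (n : ℕ) : Finset ℝ :=
  (Finset.Icc 1 n).image fun k : ℕ => tan (π / 2 - k * π / (n + 1))

lemma mul_pi_div_mem_Ioo {n k : ℕ} (hk : k ∈ Finset.Icc 1 n) :
    (k * π / (n + 1) : ℝ) ∈ Ioo 0 π := by
  obtain ⟨hk₁, hk₂⟩ := Finset.mem_Icc.mp hk
  have hk₁' : (1 : ℝ) ≤ k := by exact_mod_cast hk₁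
  have hk₂' : (k : ℝ) ≤ n := by exact_mod_cast hk₂
  constructor
  · positivity
  · rw [div_lt_iff₀ (by positivity)]; nlinarith [pi_pos]

lemma card_cotZeros (n : ℕ) : (cotZeros n).card = n := by
  rw [cotZeros, Finset.card_image_of_injOn, Nat.card_Icc, Nat.add_sub_cancel]
  intro k hk j hj hkj
  have := congrArg arccot hkj
  rw [arccot_tan_pi_div_two_sub (mul_pi_div_mem_Ioo hk),
    arccot_tan_pi_div_two_sub (mul_pi_div_mem_Ioo hj)] at this
  field_simp at this
  exact_mod_cast this

lemma sin_mul_arccot_eq_zero_iff (n : ℕ) (x : ℝ) :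
    sin ((n + 1 : ℕ) * arccot x) = 0 ↔ x ∈ cotZeros n := by
  constructor
  · intro h
    obtain ⟨m, hm⟩ := sin_eq_zero_iff.mp h
    obtain ⟨h₀, hπ⟩ := arccot_mem_Ioo x
    push_cast at hm
    have hm₀ : (0 : ℝ) < m := by nlinarith [pi_pos]
    have hmn : (m : ℝ) < n + 1 := by nlinarith [pi_pos]
    lift m to ℕ using by exact_mod_cast hm₀.le
    push_cast at hm hm₀ hmn
    refine Finset.mem_image.mpr ⟨m, Finset.mem_Icc.mpr ⟨?_, ?_⟩, ?_⟩
    · exact_mod_cast hm₀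
    · exact_mod_cast Nat.lt_succ_iff.mp (by exact_mod_cast hmn)
    · rw [← tan_pi_div_two_sub_arccot x]
      congr 2
      field_simp
      linarith
  · intro hx
    obtain ⟨k, hk, rfl⟩ := Finset.mem_image.mp hx
    rw [arccot_tan_pi_div_two_sub (mul_pi_div_mem_Ioo hk)]
    convert sin_nat_mul_pi k using 2
    push_cast
    field_simp

theorem cauchy_density_bell_shaped (n : ℕ) :
    ∃ Z : Finset ℝ, Z.card = n ∧
      (∀ x : ℝ, iteratedDeriv n (fun t : ℝ => 1 / (π * (1 + t ^ 2))) x = 0 ↔ x ∈ Z) ∧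
      ∀ x ∈ Z, ∃ ε > (0:ℝ), ∀ y z : ℝ, x - ε < y → y < x → x < z → z < x + ε →
        iteratedDeriv n (fun t : ℝ => 1 / (π * (1 + t ^ 2))) y *
          iteratedDeriv n (fun t : ℝ => 1 / (π * (1 + t ^ 2))) z < 0 := by
  have hc : (-1 : ℝ) ^ n * n.factorial / π ≠ 0 := by
    simp [pi_ne_zero, Nat.factorial_ne_zero]
  have hamp (x : ℝ) : 0 < sin (arccot x) ^ (n + 1) :=
    pow_pos (sin_pos_of_mem_Ioo (arccot_mem_Ioo x)) _
  rw [iteratedDeriv_cauchy_density]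
  refine ⟨cotZeros n, card_cotZeros n, fun x => ?_, fun x hx => ?_⟩
  · simp only [cauchyHarmonic, mul_eq_zero, hc, (hamp x).ne', false_or]
    exact sin_mul_arccot_eq_zero_iff n x
  · have hphase : StrictAnti fun t => ((n + 1 : ℕ) : ℝ) * arccot t :=
      strictAnti_arccot.const_mul (by positivity)
    have hsign := signChangesAt_sin_comp hphase (continuous_arccot.const_mul _).continuousAt
      ((sin_mul_arccot_eq_zero_iff n x).mpr hx)
    exact (hsign.pos_mul hamp).const_mul hc
end

section
/- Let ρ ∈ (0,1], α ∈ (0,1), and let n ≥ 2 be an integer such that 1/(ρα) is not an integer and 1/(ρα) < n. Then there exists k ∈ {2,...,n} with ∏_{j=1}^k sin(π j ρ α) < 0. -/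
open Real Finset

theorem sin_product_sign_obstruction_delta (ρ α : ℝ)
    (hρ : ρ ∈ Set.Ioc (0:ℝ) 1) (hα : α ∈ Set.Ioo (0:ℝ) 1)
    (n : ℕ) (hn : 2 ≤ n) (hlt : 1 / (ρ * α) < n)
    (hnotint : ¬ ∃ m : ℕ, 1 / (ρ * α) = m) :
    ∃ k : ℕ, 2 ≤ k ∧ k ≤ n ∧
      (∏ j ∈ Finset.Icc 1 k, Real.sin (π * j * (ρ * α))) < 0 := by
  obtain ⟨hρ0, hρ1⟩ := hρ
  obtain ⟨hα0, hα1⟩ := hα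
  set c : ℝ := ρ * α with hc
  have hc0 : 0 < c := mul_pos hρ0 hα0
  have hc1 : c < 1 := by nlinarith
  have hd1 : (1:ℝ) < 1 / c := by
    rw [lt_div_iff₀ hc0]; linarith
  set m : ℕ := ⌈1 / c⌉₊ with hm
  have hm1 : 1 < m := Nat.lt_ceil.mpr (by exact_mod_cast hd1)
  have hm2 : 2 ≤ m := hm1
  have hmn : m ≤ n := Nat.ceil_le.mpr (by exact_mod_cast hlt.le)
  -- 1/c < m strictly (not an integer)
  have hdm : 1 / c < (m : ℝ) := by
    rcases lt_or_eq_of_le (Nat.le_ceil (1 / c)) with h | h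
    · exact h
    · exact (hnotint ⟨m, h⟩).elim
  -- m - 1 < 1/c
  have hml : ((m - 1 : ℕ) : ℝ) < 1 / c := by
    have : m - 1 < m := by omega
    exact_mod_cast Nat.lt_ceil.mp (by omega)
  -- m < 1/c + 1
  have hmu : (m : ℝ) < 1 / c + 1 := Nat.ceil_lt_add_one (by positivity)
  refine ⟨m, hm2, hmn, ?_⟩
  have hsplit : Finset.Icc 1 m = Finset.Icc 1 ((m - 1) + 1) := by
    congr 1; omega
  rw [hsplit, Finset.prod_Icc_succ_top (by omega)]
  have hlast : ((m - 1 : ℕ) + 1 : ℕ) = m := by omega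
  apply mul_neg_of_pos_of_neg
  · apply Finset.prod_pos
    intro j hj
    simp only [Finset.mem_Icc] at hj
    apply Real.sin_pos_of_pos_of_lt_pi
    · have : (0:ℝ) < (j:ℝ) := by exact_mod_cast Nat.lt_of_lt_of_le Nat.zero_lt_one hj.1
      positivity
    · have hjlt : (j : ℝ) < 1 / c := lt_of_le_of_lt (by exact_mod_cast hj.2) hml
      have : (j : ℝ) * c < 1 := by
        rw [lt_div_iff₀ hc0] at hjlt; linarith
      calc π * j * c = π * ((j:ℝ) * c) := by ring
        _ < π * 1 := by exact mul_lt_mul_of_pos_left this Real.pi_pos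
        _ = π := by ring
  · rw [hlast]
    have h1 : 1 < (m : ℝ) * c := by
      rw [div_lt_iff₀ hc0] at hdm; linarith
    have h2 : (m : ℝ) * c < 2 := by
      have : (1 / c) * c = 1 := div_mul_cancel₀ 1 hc0.ne'
      nlinarith
    have heq : π * m * c = π * ((m:ℝ) * c - 1) + π := by ring
    rw [heq, Real.sin_add_pi]

    have : 0 < Real.sin (π * ((m:ℝ) * c - 1)) := by
      apply Real.sin_pos_of_pos_of_lt_pi
      · have := Real.pi_pos; nlinarith
      · have := Real.pi_pos; nlinarith
    linarith
end
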